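/- arXiv:2103.03432 — 4 statements merged into one kernel-verified Lean document; each statement's English description precedes it below -/
import Mathlib

section
/- Let S ⊆ ℝ^n, let (Ω, F, ℙ) be a probability space, let W be a measurable space, let F : S × W → S be Borel measurable, and let (w_t)_{t∈ℕ} be a sequence of mutually independent W-valued random variables on Ω. Let x(t) be the random solution of the stochastic recursion x(t+1) = F(x(t), w_t) with deterministic initial condition x(0) ∈ S. Suppose there exist measurable functions V_t : S → [0, ∞), t ∈ ℕ, and a constant c ∈ (0, 1) such that E[V_{t+1}(F(x, w_t))] ≤ c · V_t(x) for every x ∈ S and every t ∈ ℕ. Then V_t(x(t)) → 0 as t → ∞ almost surely. -/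
/-!
Since `x t` is a function of `w 0, …, w (t - 1)`, it is independent of `w t`, so integrating the
drift inequality against the law of `x t` gives `E V_{t+1}(x (t+1)) ≤ c · E V_t(x t)`, hence
`E V_t(x t) ≤ c ^ t V_0(x₀)`. Summing this geometric bound, `∑ₜ V_t(x t)` has finite expectation,
so it is finite almost surely and its terms tend to `0`. Working with `ENNReal.ofReal ∘ V_t`
lets monotone convergence and Tonelli apply without integrability bookkeeping.
-/

open MeasureTheory ProbabilityTheory Filter Topology
open scoped ENNReal

/-- The σ-algebra `σ(w 0, …, w (t - 1))`. -/
abbrev pastNoise {Ω W : Type*} [MeasurableSpace W] (w : ℕ → Ω → W) (t : ℕ) : MeasurableSpace Ω :=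
  ⨆ i ∈ Set.Iio t, MeasurableSpace.comap (w i) ‹_›

section PastNoise

variable {Ω W : Type*} [MeasurableSpace W]

lemma pastNoise_mono (w : ℕ → Ω → W) : Monotone (pastNoise w) := fun _ _ hst =>
  biSup_mono fun _ hi => hi.trans_le hst

lemma comap_le_pastNoise_succ (w : ℕ → Ω → W) (t : ℕ) :
    MeasurableSpace.comap (w t) ‹_› ≤ pastNoise w (t + 1) :=
  le_iSup₂ (f := fun i (_ : i ∈ Set.Iio (t + 1)) => MeasurableSpace.comap (w i) ‹_›) t
    (Nat.lt_succ_self t)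

lemma pastNoise_le [MeasurableSpace Ω] {w : ℕ → Ω → W} (hw_meas : ∀ t, Measurable (w t))
    (t : ℕ) : pastNoise w t ≤ ‹MeasurableSpace Ω› :=
  iSup₂_le fun i _ => (hw_meas i).comap_le

lemma measurable_pastNoise_of_rec {S : Type*} [MeasurableSpace S] {w : ℕ → Ω → W}
    {F : S × W → S} (hF : Measurable F) {x : ℕ → Ω → S} {x₀ : S} (hx0 : ∀ ω, x 0 ω = x₀)
    (hx_rec : ∀ t ω, x (t + 1) ω = F (x t ω, w t ω)) (t : ℕ) :
    Measurable[pastNoise w t] (x t) := by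
  induction t with
  | zero => rw [funext hx0]; exact measurable_const
  | succ t ih =>
    rw [funext (hx_rec t)]
    exact hF.comp ((ih.mono (pastNoise_mono w t.le_succ) le_rfl).prodMk
      ((comap_measurable (w t)).mono (comap_le_pastNoise_succ w t) le_rfl))

lemma ProbabilityTheory.iIndepFun.indepFun_of_measurable_pastNoise [MeasurableSpace Ω]
    {μ : Measure Ω} {w : ℕ → Ω → W} (hw_meas : ∀ t, Measurable (w t)) (hw : iIndepFun w μ) {β : Type*}
    [MeasurableSpace β] {t : ℕ} {f : Ω → β} (hf : Measurable[pastNoise w t] f) :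
    IndepFun f (w t) μ := by
  rw [IndepFun_iff_Indep]
  refine indep_of_indep_of_le (indep_iSup_of_disjoint (fun i => (hw_meas i).comap_le) hw.iIndep
    (S := Set.Iio t) (T := {t}) (by simp)) hf.comap_le ?_
  simp

end PastNoise

lemma ProbabilityTheory.IndepFun.lintegral_comp_prodMk {Ω α β : Type*} [MeasurableSpace Ω]
    [MeasurableSpace α] [MeasurableSpace β] {μ : Measure Ω} [IsFiniteMeasure μ] {X : Ω → α} {Y : Ω → β}
    (hXY : IndepFun X Y μ) (hX : Measurable X) (hY : Measurable Y) {f : α × β → ℝ≥0∞}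
    (hf : Measurable f) :
    ∫⁻ ω, f (X ω, Y ω) ∂μ = ∫⁻ ω, ∫⁻ ω', f (X ω, Y ω') ∂μ ∂μ := by
  rw [← lintegral_map hf (hX.prodMk hY),
    (indepFun_iff_map_prod_eq_prod_map_map hX.aemeasurable hY.aemeasurable).mp hXY,
    lintegral_prod f hf.aemeasurable, lintegral_map _ hX]
  · exact lintegral_congr fun a => lintegral_map (hf.comp measurable_prodMk_left) hY
  · exact hf.lintegral_prod_right'

section Drift

variable {Ω W S : Type*} [MeasurableSpace Ω] [MeasurableSpace W] [MeasurableSpace S]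
  {μ : Measure Ω} [IsProbabilityMeasure μ] {w : ℕ → Ω → W} {F : S × W → S} {x : ℕ → Ω → S}
  {x₀ : S} {U : ℕ → S → ℝ≥0∞} {a : ℝ≥0∞}

lemma lintegral_rec_succ_le (hF : Measurable F) (hw_meas : ∀ t, Measurable (w t))
    (hw : iIndepFun w μ) (hx0 : ∀ ω, x 0 ω = x₀)
    (hx_rec : ∀ t ω, x (t + 1) ω = F (x t ω, w t ω)) (hU : ∀ t, Measurable (U t))
    (h_drift : ∀ z t, ∫⁻ ω, U (t + 1) (F (z, w t ω)) ∂μ ≤ a * U t z) (t : ℕ) :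
    ∫⁻ ω, U (t + 1) (x (t + 1) ω) ∂μ ≤ a * ∫⁻ ω, U t (x t ω) ∂μ := by
  have hx := measurable_pastNoise_of_rec hF hx0 hx_rec t
  have hx_meas : Measurable (x t) := hx.mono (pastNoise_le hw_meas t) le_rfl
  calc ∫⁻ ω, U (t + 1) (x (t + 1) ω) ∂μ
      = ∫⁻ ω, ∫⁻ ω', U (t + 1) (F (x t ω, w t ω')) ∂μ ∂μ := by
        simp_rw [hx_rec t]
        exact (hw.indepFun_of_measurable_pastNoise hw_meas hx).lintegral_comp_prodMk hx_meas
          (hw_meas t) ((hU (t + 1)).comp hF)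
    _ ≤ ∫⁻ ω, a * U t (x t ω) ∂μ := lintegral_mono fun ω => h_drift _ t
    _ = a * ∫⁻ ω, U t (x t ω) ∂μ := lintegral_const_mul a ((hU t).comp hx_meas)

lemma lintegral_rec_le_pow (hF : Measurable F) (hw_meas : ∀ t, Measurable (w t))
    (hw : iIndepFun w μ) (hx0 : ∀ ω, x 0 ω = x₀)
    (hx_rec : ∀ t ω, x (t + 1) ω = F (x t ω, w t ω)) (hU : ∀ t, Measurable (U t))
    (h_drift : ∀ z t, ∫⁻ ω, U (t + 1) (F (z, w t ω)) ∂μ ≤ a * U t z) (t : ℕ) :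
    ∫⁻ ω, U t (x t ω) ∂μ ≤ a ^ t * U 0 x₀ := by
  induction t with
  | zero => simp [hx0]
  | succ t ih =>
    calc ∫⁻ ω, U (t + 1) (x (t + 1) ω) ∂μ
        ≤ a * ∫⁻ ω, U t (x t ω) ∂μ :=
          lintegral_rec_succ_le hF hw_meas hw hx0 hx_rec hU h_drift t
      _ ≤ a * (a ^ t * U 0 x₀) := by gcongr
      _ = a ^ (t + 1) * U 0 x₀ := by ring

end Drift

lemma ae_tendsto_zero_of_tsum_lintegral_ne_top {α : Type*} [MeasurableSpace α] {μ : Measure α}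
    {f : ℕ → α → ℝ≥0∞} (hf : ∀ n, AEMeasurable (f n) μ) (h : ∑' n, ∫⁻ a, f n a ∂μ ≠ ∞) :
    ∀ᵐ a ∂μ, Tendsto (fun n => f n a) atTop (𝓝 0) := by
  rw [← lintegral_tsum hf] at h
  filter_upwards [ae_lt_top' (AEMeasurable.tsum hf) h] with a ha
  exact ENNReal.tendsto_atTop_zero_of_tsum_ne_top ha.ne

/-- Let `S ⊆ ℝ^n`, let `(Ω, F, ℙ)` be a probability space, `W` a
measurable space, `F : S × W → S` Borel measurable, and `(w_t)` a sequence of mutually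
independent `W`-valued random variables.  Let `x(t)` solve `x(t+1) = F(x(t), w_t)` with
deterministic `x(0) = x₀ ∈ S`.  If there are measurable `V_t : S → [0, ∞)` and `c ∈ (0,1)`
with `E[V_{t+1}(F(x, w_t))] ≤ c V_t(x)` for all `x ∈ S` and `t`, then `V_t(x(t)) → 0`
almost surely. -/
theorem stochastic_lyapunov_decay
    {n : ℕ} (S : Set (EuclideanSpace ℝ (Fin n)))
    {Ω : Type*} [MeasurableSpace Ω] (μ : Measure Ω) [IsProbabilityMeasure μ]
    {W : Type*} [MeasurableSpace W]
    (F : S × W → S) (hF : Measurable F)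
    (w : ℕ → Ω → W) (hw_meas : ∀ t, Measurable (w t))
    (hw_indep : iIndepFun w μ)
    (x : ℕ → Ω → S) (x₀ : S) (hx0 : ∀ ω, x 0 ω = x₀)
    (hx_rec : ∀ t ω, x (t + 1) ω = F (x t ω, w t ω))
    (V : ℕ → S → ℝ)
    (hV_meas : ∀ t, Measurable (V t))
    (hV_nonneg : ∀ t (z : S), 0 ≤ V t z)
    (hV_int : ∀ (z : S) (t : ℕ), Integrable (fun ω => V (t + 1) (F (z, w t ω))) μ)
    (c : ℝ) (hc : c ∈ Set.Ioo (0 : ℝ) 1)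
    (h_drift : ∀ (z : S) (t : ℕ),
      (∫ ω, V (t + 1) (F (z, w t ω)) ∂μ) ≤ c * V t z) :
    ∀ᵐ ω ∂μ, Tendsto (fun t => V t (x t ω)) atTop (nhds 0) := by
  set U : ℕ → S → ℝ≥0∞ := fun t z => ENNReal.ofReal (V t z)
  have hU : ∀ t, Measurable (U t) := fun t => (hV_meas t).ennreal_ofReal
  have hU_drift : ∀ z t, ∫⁻ ω, U (t + 1) (F (z, w t ω)) ∂μ ≤ ENNReal.ofReal c * U t z := by
    intro z t
    rw [← ofReal_integral_eq_lintegral_ofReal (hV_int z t) (ae_of_all _ fun _ => hV_nonneg _ _),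
      ← ENNReal.ofReal_mul hc.1.le]
    exact ENNReal.ofReal_le_ofReal (h_drift z t)
  have h_sum : ∑' t, ∫⁻ ω, U t (x t ω) ∂μ ≠ ∞ := by
    refine ne_top_of_le_ne_top ?_ (ENNReal.tsum_le_tsum
      (lintegral_rec_le_pow hF hw_meas hw_indep hx0 hx_rec hU hU_drift))
    rw [ENNReal.tsum_mul_right, ENNReal.tsum_geometric]
    exact ENNReal.mul_ne_top (ENNReal.inv_ne_top.mpr
      (tsub_pos_of_lt (ENNReal.ofReal_lt_one.mpr hc.2)).ne') ENNReal.ofReal_ne_top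
  have hx_meas (t : ℕ) : Measurable (x t) :=
    (measurable_pastNoise_of_rec hF hx0 hx_rec t).mono (pastNoise_le hw_meas t) le_rfl
  filter_upwards [ae_tendsto_zero_of_tsum_lintegral_ne_top
    (fun t => ((hU t).comp (hx_meas t)).aemeasurable) h_sum] with ω hω
  have h_toReal := (ENNReal.tendsto_toReal ENNReal.zero_ne_top).comp hω
  simpa only [Function.comp_def, U, ENNReal.toReal_ofReal (hV_nonneg _ _),
    ENNReal.toReal_zero] using h_toReal
end

section
/- Let G be a finite simple graph on the vertex set {1, …, N} with edge set E and Laplacian matrix L, and let M be a positive integer. Let c be a random variable taking values in the maps E → {1, …, M} such that (a) almost surely, any two distinct adjacent edges receive different colors, and (b) ℙ(c(e) = k) = 1/M for every edge e ∈ E and every k ∈ {1, …, M}. For k ∈ {1, …, M}, let L^k denote the random channel Laplacian, i.e., the Laplacian of the spanning subgraph of G consisting of the edges e with c(e) = k. Then for every k ∈ {1, …, M}: E[L^k] = (1/M)·L and E[(L^k)²] = (2/M)·L. -/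
open Matrix MeasureTheory

/-- The Laplacian matrix of a finite simple graph on `Fin N`. -/
def lapMat {N : ℕ} (G : SimpleGraph (Fin N)) [DecidableRel G.Adj] :
    Matrix (Fin N) (Fin N) ℝ :=
  Matrix.of fun i j =>
    if i = j then (G.degree i : ℝ) else if G.Adj i j then -1 else 0

/-- Given a coloring `col` of the edges of `G` with colors in `Fin M`, the channel
Laplacian `L^k` is the Laplacian of the spanning subgraph of `G` consisting of the
edges colored `k`. -/
def chLap {N M : ℕ} (G : SimpleGraph (Fin N)) [DecidableRel G.Adj]
    (col : Sym2 (Fin N) → Fin M) (k : Fin M) :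
    Matrix (Fin N) (Fin N) ℝ :=
  Matrix.of fun i j =>
    if i = j then ∑ v ∈ G.neighborFinset i, (if col s(i, v) = k then (1 : ℝ) else 0)
    else if G.Adj i j ∧ col s(i, j) = k then -1 else 0

/-! For a proper edge colouring every colour class is a matching. With `D` and `A` the degree
and adjacency matrices of a matching, `D² = D`, `DA = AD = A` and `A² = D`, so its Laplacian
`D - A` satisfies `L² = 2L`. Hence the second moment of a channel Laplacian is twice the first,
and the first is an entrywise combination of the indicators `1{c(e) = k}`, each of mean `1/M`. -/

namespace SimpleGraph

variable {V R : Type*} [Fintype V] {H : SimpleGraph V} [DecidableRel H.Adj]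

lemma eq_of_adj_of_adj_of_degree_le_one {u v w : V} (hu : H.degree u ≤ 1)
    (hv : H.Adj u v) (hw : H.Adj u w) : v = w :=
  Finset.card_le_one.mp hu v (by simpa using hv) w (by simpa using hw)

lemma degree_eq_one_of_adj_of_degree_le_one {v w : V} (hv : H.degree v ≤ 1) (h : H.Adj v w) :
    H.degree v = 1 :=
  le_antisymm hv ((H.degree_pos_iff_exists_adj v).mpr ⟨w, h⟩)

variable [DecidableEq V]

lemma degMatrix_mul_self_of_degree_le_one [NonAssocSemiring R] (hH : ∀ v, H.degree v ≤ 1) :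
    H.degMatrix R * H.degMatrix R = H.degMatrix R := by
  ext v w
  rw [degMatrix, Matrix.diagonal_mul_diagonal]
  congr
  ext v
  rcases Nat.le_one_iff_eq_zero_or_eq_one.mp (hH v) with h | h <;> simp [h]

lemma degMatrix_mul_adjMatrix_of_degree_le_one [NonAssocSemiring R] (hH : ∀ v, H.degree v ≤ 1) :
    H.degMatrix R * H.adjMatrix R = H.adjMatrix R := by
  ext v w
  rw [degMatrix, Matrix.diagonal_mul]
  by_cases h : H.Adj v w
  · simp [h, degree_eq_one_of_adj_of_degree_le_one (hH v) h]
  · simp [h]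

lemma adjMatrix_mul_degMatrix_of_degree_le_one [NonAssocSemiring R] (hH : ∀ v, H.degree v ≤ 1) :
    H.adjMatrix R * H.degMatrix R = H.adjMatrix R := by
  ext v w
  rw [degMatrix, Matrix.mul_diagonal]
  by_cases h : H.Adj v w
  · simp [h, degree_eq_one_of_adj_of_degree_le_one (hH w) h.symm]
  · simp [h]

lemma adjMatrix_mul_self_of_degree_le_one [NonAssocSemiring R] (hH : ∀ v, H.degree v ≤ 1) :
    H.adjMatrix R * H.adjMatrix R = H.degMatrix R := by
  ext v w
  by_cases hvw : v = w
  · rw [hvw, adjMatrix_mul_self_apply_self, degMatrix, Matrix.diagonal_apply_eq]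
  · rw [adjMatrix_mul_apply, degMatrix, Matrix.diagonal_apply_ne _ hvw]
    refine Finset.sum_eq_zero fun u hu => ?_
    have : ¬ H.Adj u w := fun huw =>
      hvw (eq_of_adj_of_adj_of_degree_le_one (hH u) ((mem_neighborFinset _ _ _).mp hu).symm huw)
    simp [this]

lemma lapMatrix_mul_self_of_degree_le_one [Ring R] (hH : ∀ v, H.degree v ≤ 1) :
    H.lapMatrix R * H.lapMatrix R = 2 • H.lapMatrix R := by
  rw [lapMatrix, sub_mul, mul_sub, mul_sub, degMatrix_mul_self_of_degree_le_one hH,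
    degMatrix_mul_adjMatrix_of_degree_le_one hH, adjMatrix_mul_degMatrix_of_degree_le_one hH,
    adjMatrix_mul_self_of_degree_le_one hH, two_nsmul]
  abel

section EdgeColoring

variable {V α : Type*}

def IsProperEdgeColoring (G : SimpleGraph V) (col : Sym2 V → α) : Prop :=
  ∀ e ∈ G.edgeSet, ∀ e' ∈ G.edgeSet, e ≠ e' → (∃ v, v ∈ e ∧ v ∈ e') → col e ≠ col e'

def colorClass (G : SimpleGraph V) (col : Sym2 V → α) (k : α) : SimpleGraph V where
  Adj i j := G.Adj i j ∧ col s(i, j) = k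
  symm := ⟨fun _ _ h => ⟨h.1.symm, Sym2.eq_swap ▸ h.2⟩⟩
  loopless := ⟨fun _ h => G.irrefl h.1⟩

@[simp]
lemma colorClass_adj {G : SimpleGraph V} {col : Sym2 V → α} {k : α} {i j : V} :
    (G.colorClass col k).Adj i j ↔ G.Adj i j ∧ col s(i, j) = k :=
  Iff.rfl

variable [Fintype V] [DecidableEq α] {G : SimpleGraph V} [DecidableRel G.Adj]

instance (col : Sym2 V → α) (k : α) : DecidableRel (G.colorClass col k).Adj :=
  fun i j => inferInstanceAs (Decidable (G.Adj i j ∧ col s(i, j) = k))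

lemma neighborFinset_colorClass (col : Sym2 V → α) (k : α) (v : V) :
    (G.colorClass col k).neighborFinset v = (G.neighborFinset v).filter (col s(v, ·) = k) := by
  ext w
  simp

lemma IsProperEdgeColoring.degree_colorClass_le_one {col : Sym2 V → α}
    (hcol : G.IsProperEdgeColoring col) (k : α) (v : V) :
    (G.colorClass col k).degree v ≤ 1 := by
  refine Finset.card_le_one.mpr fun u hu w hw => by_contra fun huw => ?_
  rw [mem_neighborFinset, colorClass_adj] at hu hw
  refine hcol s(v, u) hu.1 s(v, w) hw.1 ?_ ⟨v, by simp, by simp⟩ (hu.2.trans hw.2.symm)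
  simp [huw, hu.1.ne']

end EdgeColoring

end SimpleGraph

open SimpleGraph

section ChannelLaplacian

variable {N M : ℕ} {G : SimpleGraph (Fin N)} [DecidableRel G.Adj] {col : Sym2 (Fin N) → Fin M}

lemma chLap_eq_lapMatrix_colorClass (k : Fin M) :
    chLap G col k = (G.colorClass col k).lapMatrix ℝ := by
  ext i j
  by_cases hij : i = j
  · subst hij
    simp [chLap, lapMatrix, degMatrix, ← card_neighborFinset_eq_degree,
      neighborFinset_colorClass, Finset.sum_boole]
  · simp only [chLap, lapMatrix, degMatrix, Matrix.sub_apply, of_apply, if_neg hij,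
      diagonal_apply_ne _ hij, adjMatrix_apply, colorClass_adj]
    split_ifs <;> simp

lemma chLap_mul_self (hcol : G.IsProperEdgeColoring col) (k : Fin M) :
    chLap G col k * chLap G col k = 2 • chLap G col k := by
  rw [chLap_eq_lapMatrix_colorClass]
  exact lapMatrix_mul_self_of_degree_le_one (hcol.degree_colorClass_le_one k)

end ChannelLaplacian

section Expectation

variable {Ω α : Type*} [DecidableEq α] {X : Ω → α}

lemma ite_eq_one_zero_eq_indicator (a : α) :
    (fun ω => if X ω = a then (1 : ℝ) else 0) = {ω | X ω = a}.indicator 1 := by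
  ext ω
  simp [Set.indicator_apply]

variable [MeasurableSpace Ω] {μ : Measure Ω} [MeasurableSpace α] [MeasurableSingletonClass α]

lemma integrable_ite_eq_one_zero [IsFiniteMeasure μ] (hX : Measurable X) (a : α) :
    Integrable (fun ω => if X ω = a then (1 : ℝ) else 0) μ := by
  rw [ite_eq_one_zero_eq_indicator]
  exact (integrable_const 1).indicator (hX (measurableSet_singleton a))

lemma integral_ite_eq_one_zero (hX : Measurable X) (a : α) :
    ∫ ω, (if X ω = a then (1 : ℝ) else 0) ∂μ = μ.real {ω | X ω = a} := by
  rw [ite_eq_one_zero_eq_indicator]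
  exact integral_indicator_one (hX (measurableSet_singleton a))

end Expectation

section ChannelLaplacianMoments

variable {N M : ℕ} {G : SimpleGraph (Fin N)} [DecidableRel G.Adj]
  {Ω : Type*} [MeasurableSpace Ω] {μ : Measure Ω}
  {c : Ω → Sym2 (Fin N) → Fin M}

lemma integral_chLap_apply [IsFiniteMeasure μ] (hc_meas : ∀ e, Measurable fun ω => c ω e)
    (hc_unif : ∀ e ∈ G.edgeSet, ∀ k, μ {ω | c ω e = k} = 1 / (M : ENNReal)) (k : Fin M)
    (i j : Fin N) :
    ∫ ω, chLap G (c ω) k i j ∂μ = (1 / (M : ℝ)) * lapMat G i j := by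
  have hcolor : ∀ e ∈ G.edgeSet, ∫ ω, (if c ω e = k then (1 : ℝ) else 0) ∂μ = 1 / M := by
    intro e he
    simp [integral_ite_eq_one_zero (hc_meas e), measureReal_def, hc_unif e he k]
  by_cases hij : i = j
  · subst hij
    simp only [chLap, lapMat, of_apply, if_true]
    rw [integral_finsetSum _ fun v _ => integrable_ite_eq_one_zero (hc_meas _) k,
      Finset.sum_congr rfl fun v hv => hcolor s(i, v) ((mem_neighborFinset G i v).mp hv),
      Finset.sum_const, card_neighborFinset_eq_degree, nsmul_eq_mul, mul_comm]
  · by_cases hadj : G.Adj i j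
    · have hneg : (fun ω => chLap G (c ω) k i j) =
          fun ω => -(if c ω s(i, j) = k then 1 else 0) := by
        ext ω
        split_ifs <;> simp_all [chLap]
      rw [hneg, integral_neg, hcolor s(i, j) hadj]
      simp [lapMat, hij, hadj]
    · simp [chLap, lapMat, hij, hadj]

lemma integral_chLap_mul_self_apply
    (hc_proper : ∀ᵐ ω ∂μ, G.IsProperEdgeColoring (c ω)) (k : Fin M) (i j : Fin N) :
    ∫ ω, (chLap G (c ω) k * chLap G (c ω) k) i j ∂μ = 2 * ∫ ω, chLap G (c ω) k i j ∂μ := by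
  rw [← integral_const_mul]
  refine integral_congr_ae (hc_proper.mono fun ω hω => ?_)
  simp [chLap_mul_self hω k, two_mul]

end ChannelLaplacianMoments

theorem channel_laplacian_moments_general
    {N : ℕ} (G : SimpleGraph (Fin N)) [DecidableRel G.Adj]
    (M : ℕ)
    {Ω : Type*} [MeasurableSpace Ω] (μ : Measure Ω) [IsProbabilityMeasure μ]
    (c : Ω → Sym2 (Fin N) → Fin M)
    (hc_meas : ∀ e : Sym2 (Fin N), Measurable fun ω => c ω e)
    (hc_proper : ∀ᵐ ω ∂μ, ∀ e ∈ G.edgeSet, ∀ e' ∈ G.edgeSet, e ≠ e' →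
      (∃ v : Fin N, v ∈ e ∧ v ∈ e') → c ω e ≠ c ω e')
    (hc_unif : ∀ e ∈ G.edgeSet, ∀ k : Fin M,
      μ {ω | c ω e = k} = 1 / (M : ENNReal)) :
    ∀ (k : Fin M) (i j : Fin N),
      (∫ ω, chLap G (c ω) k i j ∂μ) = (1 / (M : ℝ)) * lapMat G i j ∧
      (∫ ω, (chLap G (c ω) k * chLap G (c ω) k) i j ∂μ) = (2 / (M : ℝ)) * lapMat G i j := by
  intro k i j
  have hmean := integral_chLap_apply hc_meas hc_unif k i j
  refine ⟨hmean, ?_⟩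
  rw [integral_chLap_mul_self_apply hc_proper, hmean]
  ring

/-- Let `G` be a finite simple graph on `{1, …, N}` with Laplacian `L`,
`M ≥ 1`, and let `c` be a random edge coloring of `G` with colors `{1, …, M}` such that
(a) almost surely distinct adjacent edges get different colors and (b) each edge gets each
color with probability `1/M`.  Then the random channel Laplacians `L^k` satisfy
`E[L^k] = (1/M) L` and `E[(L^k)²] = (2/M) L` (expectations entrywise). -/
theorem channel_laplacian_moments
    {N : ℕ} (G : SimpleGraph (Fin N)) [DecidableRel G.Adj]
    (M : ℕ) (hM : 0 < M)
    {Ω : Type*} [MeasurableSpace Ω] (μ : Measure Ω) [IsProbabilityMeasure μ]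
    (c : Ω → Sym2 (Fin N) → Fin M)
    (hc_meas : ∀ e : Sym2 (Fin N), Measurable fun ω => c ω e)
    (hc_proper : ∀ᵐ ω ∂μ, ∀ e ∈ G.edgeSet, ∀ e' ∈ G.edgeSet, e ≠ e' →
      (∃ v : Fin N, v ∈ e ∧ v ∈ e') → c ω e ≠ c ω e')
    (hc_unif : ∀ e ∈ G.edgeSet, ∀ k : Fin M,
      μ {ω | c ω e = k} = 1 / (M : ENNReal)) :
    ∀ (k : Fin M) (i j : Fin N),
      (∫ ω, chLap G (c ω) k i j ∂μ) = (1 / (M : ℝ)) * lapMat G i j ∧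
      (∫ ω, (chLap G (c ω) k * chLap G (c ω) k) i j ∂μ) = (2 / (M : ℝ)) * lapMat G i j :=
  channel_laplacian_moments_general G M μ c hc_meas hc_proper hc_unif
end

section
/- In the setting of the common-privacy-degree dynamics — G a connected finite simple graph on {1, …, N} with maximum degree d_max, M ≥ 2·d_max − 1, γ ∈ (0, 1), distinct nonzero keys s_1, …, s_M, common degree p₀ ≤ M − 1, (c_t) mutually independent random proper edge colorings with uniform marginals ℙ(c_t(e) = k) = 1/M, channel Laplacians L^k(t), and each agent i updating r_i(t) ∈ ℝ^M by r̃_i^k(t+1) = r_i^k(t) + γ Σ_{j:{i,j}∈E} 1(c_t({i,j})=k)(r_j^k(t) − r_i^k(t)), r_i(t+1) = T̄_{p₀} r̃_i(t+1) — suppose each initial vector is generated by a polynomial: r_i^k(0) = f_i(s_k) where f_i(θ) = Σ_{ℓ=1}^{p₀} a_{iℓ} θ^ℓ + x_i(0), and define the state x_i(t) = Σ_{k=1}^M r_i^k(t) · ( Π_{ℓ≠k} (−s_ℓ) ) / ( Π_{ℓ≠k} (s_k − s_ℓ) ). Then, almost surely, for every i ∈ {1, …, N}, lim_{t→∞} x_i(t)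 = (1/N) Σ_{j=1}^N x_j(0); i.e., average consensus is reached almost surely. -/
open Matrix MeasureTheory ProbabilityTheory Filter

def vandMat (M p : ℕ) (s : Fin M → ℝ) : Matrix (Fin M) (Fin (p + 1)) ℝ :=
  Matrix.of fun k ℓ => s k ^ (ℓ : ℕ)

noncomputable def projMat (M p : ℕ) (s : Fin M → ℝ) : Matrix (Fin M) (Fin M) ℝ :=
  vandMat M p s * ((vandMat M p s).transpose * vandMat M p s)⁻¹ * (vandMat M p s).transpose

open Finset Topology

/-!
Within a round the channels decouple. Because the coloring is proper, the edges of colour `k`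
form a matching, so on channel `k` the gossip step replaces `r_i` by `(1 - γ) r_i + γ r_{m(i)}`
for an involution `m`: this preserves the channel sum and lowers `∑ᵢ (r_i - r̄)²` by
`γ (1 - γ)` times the Dirichlet energy of the colour-`k` edges. The projection `T̄` is
orthogonal and fixes the average `r̄`, which lies in the span of the Vandermonde columns, so
it only lowers the deviation further. As `c_t` is independent of the past and colours each
edge `k` with probability `1/M`, the expected decrease is `γ (1 - γ) / M` times the full
Dirichlet energy, which by the Poincaré inequality of the connected graph dominates a fixed
multiple of the deviation. The expected deviation thus decays geometrically, is summable, and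
tends to `0` almost surely. Finally the Lagrange weights evaluate the interpolating polynomial
at `0`, so they read off the constant coefficient of `r̄`, the average of the `x_i(0)`.
-/

section OrthogonalProjection

variable {m n : Type*} [Fintype m] [Fintype n] [DecidableEq n] {A : Matrix m n ℝ}

lemma isUnit_transpose_mul_self (hA : Function.Injective A.mulVec) : IsUnit (Aᵀ * A) := by
  simpa [conjTranspose_eq_transpose_of_trivial] using (PosDef.conjTranspose_mul_self A hA).isUnit

lemma mul_inv_transpose_mul_self_mul (hA : Function.Injective A.mulVec) :
    A * (Aᵀ * A)⁻¹ * Aᵀ * A = A := by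
  simp only [Matrix.mul_assoc]
  rw [nonsing_inv_mul _ ((isUnit_transpose_mul_self hA).map detMonoidHom), Matrix.mul_one]

lemma isSymm_mul_inv_transpose_mul_self_mul_transpose : (A * (Aᵀ * A)⁻¹ * Aᵀ).IsSymm := by
  rw [IsSymm, transpose_mul, transpose_mul, transpose_transpose, transpose_nonsing_inv,
    transpose_mul, transpose_transpose, Matrix.mul_assoc]

lemma isIdempotentElem_mul_inv_transpose_mul_self_mul_transpose
    (hA : Function.Injective A.mulVec) : IsIdempotentElem (A * (Aᵀ * A)⁻¹ * Aᵀ) := by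
  rw [IsIdempotentElem]
  conv_lhs => rw [← Matrix.mul_assoc, ← Matrix.mul_assoc, mul_inv_transpose_mul_self_mul hA]

end OrthogonalProjection

lemma dotProduct_mulVec_self_le {κ : Type*} [Fintype κ] {P : Matrix κ κ ℝ} (hPs : P.IsSymm)
    (hPi : IsIdempotentElem P) (v : κ → ℝ) : (P *ᵥ v) ⬝ᵥ (P *ᵥ v) ≤ v ⬝ᵥ v := by
  have hPv : (P *ᵥ v) ⬝ᵥ (P *ᵥ v) = (P *ᵥ v) ⬝ᵥ v := by
    rw [dotProduct_mulVec, ← mulVec_transpose, mulVec_mulVec, hPs.eq, hPi.eq, dotProduct_comm]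
  have h := dotProduct_self_star_nonneg (v - P *ᵥ v)
  rw [star_trivial, sub_dotProduct, dotProduct_sub, dotProduct_sub, dotProduct_comm v (P *ᵥ v)] at h
  linarith

variable {M p : ℕ} {s : Fin M → ℝ}

lemma vandMat_mulVec_apply (y : Fin (p + 1) → ℝ) (k : Fin M) :
    (vandMat M p s *ᵥ y) k = ∑ ℓ, y ℓ * s k ^ (ℓ : ℕ) := by
  simp [mulVec, dotProduct, vandMat, mul_comm]

lemma injective_vandMat_mulVec (hs : Function.Injective s) (hp : p + 1 ≤ M) :
    Function.Injective (vandMat M p s).mulVec := by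
  have hv : Function.Injective (s ∘ Fin.castLE hp) := hs.comp (Fin.castLE_injective hp)
  refine (injective_iff_map_eq_zero (vandMat M p s).mulVecLin).2 fun y hy => ?_
  refine eq_zero_of_mulVec_eq_zero (det_vandermonde_ne_zero_iff.2 hv) (funext fun i => ?_)
  simpa [vandermonde, mulVec, dotProduct, vandMat] using congrFun hy (Fin.castLE hp i)

lemma projMat_mulVec_vandMat_mulVec (hs : Function.Injective s) (hp : p + 1 ≤ M)
    (y : Fin (p + 1) → ℝ) : projMat M p s *ᵥ (vandMat M p s *ᵥ y) = vandMat M p s *ᵥ y := by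
  rw [mulVec_mulVec, projMat, mul_inv_transpose_mul_self_mul (injective_vandMat_mulVec hs hp)]

lemma Lagrange.eval_basis {F ι : Type*} [Field F] [DecidableEq ι] (t : Finset ι) (v : ι → F)
    (i : ι) (x : F) : (Lagrange.basis t v i).eval x =
      (∏ j ∈ t.erase i, (x - v j)) / ∏ j ∈ t.erase i, (v i - v j) := by
  simp [Lagrange.basis, Lagrange.basisDivisor, Polynomial.eval_prod, div_eq_mul_inv,
    prod_mul_distrib, prod_inv_distrib, mul_comm]

lemma sum_vandMat_mulVec_mul_lagrange (hs : Function.Injective s) (hp : p + 1 ≤ M)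
    (y : Fin (p + 1) → ℝ) :
    ∑ k, (vandMat M p s *ᵥ y) k *
      ((∏ ℓ ∈ univ.erase k, (-(s ℓ))) / (∏ ℓ ∈ univ.erase k, (s k - s ℓ))) = y 0 := by
  set f : Polynomial ℝ := ∑ ℓ, Polynomial.C (y ℓ) * Polynomial.X ^ (ℓ : ℕ)
  have hf_eval : ∀ x, f.eval x = ∑ ℓ, y ℓ * x ^ (ℓ : ℕ) := by
    simp [f, Polynomial.eval_finsetSum]
  have hf : f.degree < #(univ : Finset (Fin M)) :=
    (Polynomial.degree_sum_fin_lt y).trans_le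
      (by rw [card_univ, Fintype.card_fin]; exact_mod_cast hp)
  symm
  calc y 0 = f.eval 0 := by simp [hf_eval, Fin.sum_univ_succ]
    _ = (Lagrange.interpolate univ s fun k => f.eval (s k)).eval 0 :=
        congrArg _ (Lagrange.eq_interpolate (fun _ _ _ _ h => hs h) hf)
    _ = _ := by
        simp [Lagrange.interpolate_apply, Polynomial.eval_finsetSum, Lagrange.eval_basis,
          hf_eval, vandMat_mulVec_apply]

lemma sum_sq_one_sub_mul_add_mul_comp {ι : Type*} [Fintype ι] {m : ι → ι}
    (hm : Function.Involutive m) (γ : ℝ) (u : ι → ℝ) :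
    ∑ i, ((1 - γ) * u i + γ * u (m i)) ^ 2
      = ∑ i, u i ^ 2 - γ * (1 - γ) * ∑ i, (u i - u (m i)) ^ 2 := by
  have h : ∑ i, u (m i) ^ 2 = ∑ i, u i ^ 2 := Equiv.sum_comp hm.toPerm fun i => u i ^ 2
  calc ∑ i, ((1 - γ) * u i + γ * u (m i)) ^ 2
      = ∑ i, (u i ^ 2 - γ * (1 - γ) * (u i - u (m i)) ^ 2 + γ * (u (m i) ^ 2 - u i ^ 2)) :=
        sum_congr rfl fun i _ => by ring
    _ = ∑ i, u i ^ 2 - γ * (1 - γ) * ∑ i, (u i - u (m i)) ^ 2 := by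
        rw [sum_add_distrib, sum_sub_distrib, ← mul_sum, ← mul_sum, sum_sub_distrib, h]; ring

def sqDeviation {V κ : Type*} [Fintype V] [Fintype κ] (q : V → κ → ℝ) (z : κ → ℝ) : ℝ :=
  ∑ i, ∑ k, (q i k - z k) ^ 2

section Gossip

variable {V κ : Type*} {G : SimpleGraph V} {col : Sym2 V → κ} {i j : V} {k : κ}

def IsProperEdgeColoring (G : SimpleGraph V) (col : Sym2 V → κ) : Prop :=
  ∀ e ∈ G.edgeSet, ∀ e' ∈ G.edgeSet, e ≠ e' → (∃ v : V, v ∈ e ∧ v ∈ e') → col e ≠ col e'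

lemma IsProperEdgeColoring.eq_of_adj (hcol : IsProperEdgeColoring G col) {j' : V}
    (hj : G.Adj i j) (hj' : G.Adj i j') (h : col s(i, j) = col s(i, j')) : j = j' := by
  by_contra hne
  exact hcol s(i, j) hj s(i, j') hj' (fun h' => hne (Sym2.congr_right.1 h'))
    ⟨i, Sym2.mem_mk_left i j, Sym2.mem_mk_left i j'⟩ h

open Classical in
noncomputable def colorPartner (G : SimpleGraph V) (col : Sym2 V → κ) (k : κ) (i : V) : V :=
  if h : ∃ j, G.Adj i j ∧ col s(i, j) = k then h.choose else i

lemma colorPartner_eq (hcol : IsProperEdgeColoring G col) (hij : G.Adj i j)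
    (hk : col s(i, j) = k) : colorPartner G col k i = j := by
  have h : ∃ j, G.Adj i j ∧ col s(i, j) = k := ⟨j, hij, hk⟩
  rw [colorPartner, dif_pos h]
  exact hcol.eq_of_adj h.choose_spec.1 hij (h.choose_spec.2.trans hk.symm)

lemma colorPartner_eq_self (h : ¬∃ j, G.Adj i j ∧ col s(i, j) = k) :
    colorPartner G col k i = i := by
  rw [colorPartner, dif_neg h]

lemma colorPartner_involutive (hcol : IsProperEdgeColoring G col) (k : κ) :
    Function.Involutive (colorPartner G col k) := by
  intro i
  by_cases h : ∃ j, G.Adj i j ∧ col s(i, j) = k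
  · obtain ⟨j, hij, hk⟩ := h
    rw [colorPartner_eq hcol hij hk, colorPartner_eq hcol hij.symm (by rwa [Sym2.eq_swap])]
  · rw [colorPartner_eq_self h, colorPartner_eq_self h]

variable [Fintype V] [DecidableRel G.Adj] [DecidableEq κ]

lemma sum_neighborFinset_ite_mul (hcol : IsProperEdgeColoring G col) (k : κ) (i : V)
    {f : V → ℝ} (hf : f i = 0) :
    ∑ j ∈ G.neighborFinset i, (if col s(i, j) = k then 1 else 0) * f j
      = f (colorPartner G col k i) := by
  by_cases h : ∃ j, G.Adj i j ∧ col s(i, j) = k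
  · obtain ⟨j, hij, hk⟩ := h
    rw [colorPartner_eq hcol hij hk, sum_eq_single_of_mem j ((G.mem_neighborFinset i j).2 hij)]
    · simp [hk]
    · intro j' hj' hne
      rw [if_neg fun hk' => hne (hcol.eq_of_adj ((G.mem_neighborFinset i j').1 hj') hij
        (hk'.trans hk.symm)), zero_mul]
  · rw [colorPartner_eq_self h, hf]
    refine sum_eq_zero fun j hj => ?_
    rw [if_neg fun hk => h ⟨j, (G.mem_neighborFinset i j).1 hj, hk⟩, zero_mul]

variable (G) in
def gossip (γ : ℝ) (col : Sym2 V → κ) (q : V → κ → ℝ) : V → κ → ℝ :=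
  fun i k => q i k + γ * ∑ j ∈ G.neighborFinset i,
    (if col s(i, j) = k then 1 else 0) * (q j k - q i k)

lemma gossip_apply (hcol : IsProperEdgeColoring G col) (γ : ℝ) (q : V → κ → ℝ) (i : V) (k : κ) :
    gossip G γ col q i k = (1 - γ) * q i k + γ * q (colorPartner G col k i) k := by
  unfold gossip
  rw [sum_neighborFinset_ite_mul hcol k i (f := fun j => q j k - q i k) (sub_self _)]
  ring

lemma sum_gossip (hcol : IsProperEdgeColoring G col) (γ : ℝ) (q : V → κ → ℝ) :
    ∑ i, gossip G γ col q i = ∑ i, q i := by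
  funext k
  have h : ∑ i, q (colorPartner G col k i) k = ∑ i, q i k :=
    Equiv.sum_comp (colorPartner_involutive hcol k).toPerm fun i => q i k
  simp only [Finset.sum_apply, gossip_apply hcol, sum_add_distrib, ← mul_sum, h]
  ring

lemma sum_sq_gossip_sub (hcol : IsProperEdgeColoring G col) (γ : ℝ) (q : V → κ → ℝ) (k : κ)
    (a : ℝ) : ∑ i, (gossip G γ col q i k - a) ^ 2 = ∑ i, (q i k - a) ^ 2
      - γ * (1 - γ) * ∑ i, ∑ j ∈ G.neighborFinset i,
        (if col s(i, j) = k then 1 else 0) * (q i k - q j k) ^ 2 := by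
  have h1 : ∀ i, gossip G γ col q i k - a
      = (1 - γ) * (q i k - a) + γ * (q (colorPartner G col k i) k - a) := fun i => by
    rw [gossip_apply hcol]; ring
  have h2 : ∀ i, ∑ j ∈ G.neighborFinset i, (if col s(i, j) = k then 1 else 0) * (q i k - q j k) ^ 2
      = ((q i k - a) - (q (colorPartner G col k i) k - a)) ^ 2 := fun i => by
    rw [sum_neighborFinset_ite_mul hcol k i (f := fun j => (q i k - q j k) ^ 2) (by simp)]; ring
  simp only [h1, h2]
  exact sum_sq_one_sub_mul_add_mul_comp (colorPartner_involutive hcol k) γ fun i => q i k - a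


variable [Fintype κ]

variable (G) in
def coloredDirichlet (col : Sym2 V → κ) (q : V → κ → ℝ) : ℝ :=
  ∑ k, ∑ i, ∑ j ∈ G.neighborFinset i, (if col s(i, j) = k then 1 else 0) * (q i k - q j k) ^ 2

variable (G) in
def consensusStep (γ : ℝ) (P : Matrix κ κ ℝ) (col : Sym2 V → κ) (q : V → κ → ℝ) (i : V) :
    κ → ℝ :=
  P *ᵥ gossip G γ col q i

lemma sum_consensusStep (hcol : IsProperEdgeColoring G col) (γ : ℝ) (P : Matrix κ κ ℝ)
    (q : V → κ → ℝ) : ∑ i, consensusStep G γ P col q i = P *ᵥ ∑ i, q i := by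
  simp only [consensusStep, ← mulVec_sum, sum_gossip hcol]

lemma sqDeviation_consensusStep_le (hcol : IsProperEdgeColoring G col) {P : Matrix κ κ ℝ}
    (hPs : P.IsSymm) (hPi : IsIdempotentElem P) {z : κ → ℝ} (hz : P *ᵥ z = z) (γ : ℝ)
    (q : V → κ → ℝ) : sqDeviation (consensusStep G γ P col q) z
      ≤ sqDeviation q z - γ * (1 - γ) * coloredDirichlet G col q := by
  have hproj : ∀ i, ∑ k, (consensusStep G γ P col q i k - z k) ^ 2
      ≤ ∑ k, (gossip G γ col q i k - z k) ^ 2 := fun i => by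
    have h := dotProduct_mulVec_self_le hPs hPi (gossip G γ col q i - z)
    rw [mulVec_sub, hz] at h
    simpa [consensusStep, dotProduct, sq] using h
  calc sqDeviation (consensusStep G γ P col q) z
      ≤ ∑ i, ∑ k, (gossip G γ col q i k - z k) ^ 2 := sum_le_sum fun i _ => hproj i
    _ = ∑ k, ∑ i, (gossip G γ col q i k - z k) ^ 2 := sum_comm
    _ = sqDeviation q z - γ * (1 - γ) * coloredDirichlet G col q := by
      simp only [sum_sq_gossip_sub hcol, sum_sub_distrib, sqDeviation, coloredDirichlet, mul_sum]
      rw [sum_comm]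

end Gossip

lemma exists_pos_mul_norm_sq_le {E : Type*} [NormedAddCommGroup E] [NormedSpace ℝ E]
    [FiniteDimensional ℝ E] {Q : E → ℝ} (hQ : Continuous Q)
    (hhom : ∀ (a : ℝ) (v : E), Q (a • v) = a ^ 2 * Q v) (hpos : ∀ v, v ≠ 0 → 0 < Q v) :
    ∃ ε > 0, ∀ v, ε * ‖v‖ ^ 2 ≤ Q v := by
  have hQ0 : Q 0 = 0 := by simpa using hhom 0 0
  rcases subsingleton_or_nontrivial E with hE | hE
  · exact ⟨1, one_pos, fun v => by simp [Subsingleton.elim v 0, hQ0]⟩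
  obtain ⟨v₀, hv₀, hmin⟩ := (isCompact_sphere (0 : E) 1).exists_isMinOn
    (NormedSpace.sphere_nonempty.2 zero_le_one) hQ.continuousOn
  have hv₀0 : v₀ ≠ 0 := by
    rintro rfl
    simp at hv₀
  refine ⟨Q v₀, hpos v₀ hv₀0, fun v => ?_⟩
  rcases eq_or_ne v 0 with rfl | hv
  · simp [hQ0]
  have hmin' : Q v₀ ≤ ‖v‖⁻¹ ^ 2 * Q v := by
    rw [← hhom]
    exact hmin (by simp [norm_smul, hv])
  calc Q v₀ * ‖v‖ ^ 2 ≤ ‖v‖⁻¹ ^ 2 * Q v * ‖v‖ ^ 2 := by gcongr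
    _ = Q v := by field_simp

section Poincare

variable {V : Type*} [Fintype V] (G : SimpleGraph V) [DecidableRel G.Adj]

def edgeEnergy (v : V → ℝ) : ℝ := ∑ i, ∑ j ∈ G.neighborFinset i, (v i - v j) ^ 2

variable {G}

lemma edgeEnergy_nonneg (v : V → ℝ) : 0 ≤ edgeEnergy G v := by
  unfold edgeEnergy; positivity

lemma eq_of_edgeEnergy_eq_zero (hG : G.Connected) {v : V → ℝ} (h : edgeEnergy G v = 0)
    (i j : V) : v i = v j := by
  classical
  have hadj : ∀ i j, G.Adj i j → v i = v j := fun i j hij => by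
    rw [edgeEnergy, sum_eq_zero_iff_of_nonneg fun _ _ => by positivity] at h
    have := (sum_eq_zero_iff_of_nonneg fun _ _ => by positivity).1 (h i (mem_univ i)) j
      ((G.mem_neighborFinset i j).2 hij)
    exact sub_eq_zero.1 (pow_eq_zero_iff two_ne_zero |>.1 this)
  exact (G.lapMatrix_toLinearMap₂'_apply'_eq_zero_iff_forall_reachable v).1
    ((G.lapMatrix_toLinearMap₂'_apply'_eq_zero_iff_forall_adj ℝ v).2 hadj) i j (hG.preconnected i j)

lemma edgeEnergy_add_sq_sum_pos (hG : G.Connected) {v : V → ℝ} (hv : v ≠ 0) :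
    0 < edgeEnergy G v + (∑ i, v i) ^ 2 := by
  have := edgeEnergy_nonneg (G := G) v
  by_contra hle
  have h₁ : edgeEnergy G v = 0 := by nlinarith [sq_nonneg (∑ i, v i)]
  have h₂ : ∑ i, v i = 0 := by nlinarith [sq_nonneg (∑ i, v i)]
  obtain ⟨i₀⟩ := hG.nonempty
  have : Nonempty V := ⟨i₀⟩
  have hconst : ∀ i, v i = v i₀ := fun i => eq_of_edgeEnergy_eq_zero hG h₁ i i₀
  simp only [hconst, sum_const, card_univ, nsmul_eq_mul, mul_eq_zero, Nat.cast_eq_zero,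
    Fintype.card_ne_zero, false_or] at h₂
  exact hv (funext fun i => (hconst i).trans h₂)

lemma exists_pos_mul_sum_sq_le_edgeEnergy (hG : G.Connected) :
    ∃ ε > 0, ∀ v : V → ℝ, ∑ i, v i = 0 → ε * ∑ i, v i ^ 2 ≤ edgeEnergy G v := by
  have := hG.nonempty
  obtain ⟨ε, hε, hQ⟩ :=
    exists_pos_mul_norm_sq_le (Q := fun v : V → ℝ => edgeEnergy G v + (∑ i, v i) ^ 2)
      (by unfold edgeEnergy; fun_prop)
      (fun a v => by
        simp only [edgeEnergy, Pi.smul_apply, smul_eq_mul, ← mul_sub, mul_pow, ← mul_sum,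
          ← mul_add])
      (fun v hv => edgeEnergy_add_sq_sum_pos hG hv)
  refine ⟨ε / Fintype.card V, by positivity, fun v hv => ?_⟩
  have hnorm : ∑ i, v i ^ 2 ≤ Fintype.card V * ‖v‖ ^ 2 := by
    simpa using sum_le_sum fun i (_ : i ∈ univ) =>
      (sq_le_sq' (abs_le.1 (norm_le_pi_norm v i)).1 (abs_le.1 (norm_le_pi_norm v i)).2)
  calc ε / Fintype.card V * ∑ i, v i ^ 2 ≤ ε / Fintype.card V * (Fintype.card V * ‖v‖ ^ 2) := by
        gcongr
    _ = ε * ‖v‖ ^ 2 := by field_simp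
    _ ≤ edgeEnergy G v := by simpa [hv] using hQ v

lemma exists_pos_mul_sqDeviation_le {κ : Type*} [Fintype κ] (hG : G.Connected) :
    ∃ ε > 0, ∀ (q : V → κ → ℝ) (z : κ → ℝ), ∑ i, q i = (Fintype.card V : ℝ) • z →
      ε * sqDeviation q z ≤ ∑ k, edgeEnergy G fun i => q i k := by
  obtain ⟨ε, hε, h⟩ := exists_pos_mul_sum_sq_le_edgeEnergy hG
  refine ⟨ε, hε, fun q z hq => ?_⟩
  rw [sqDeviation, sum_comm, mul_sum]
  refine sum_le_sum fun k _ => ?_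
  have hk : ∑ i, (q i k - z k) = 0 := by
    rw [sum_sub_distrib, ← Finset.sum_apply, hq]
    simp
  simpa [edgeEnergy] using h (fun i => q i k - z k) hk

end Poincare

lemma sum_mul_coloredDirichlet {V κ : Type*} [Fintype V] [Fintype κ] [DecidableEq κ]
    {G : SimpleGraph V} [DecidableRel G.Adj] (S : Finset (Sym2 V → κ)) (w : (Sym2 V → κ) → ℝ)
    {a : ℝ} (hw : ∀ e ∈ G.edgeSet, ∀ k, ∑ col ∈ S, w col * (if col e = k then 1 else 0) = a)
    (q : V → κ → ℝ) :
    ∑ col ∈ S, w col * coloredDirichlet G col q = a * ∑ k, edgeEnergy G fun i => q i k := by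
  simp only [coloredDirichlet, edgeEnergy, mul_sum]
  rw [sum_comm]
  refine sum_congr rfl fun k _ => ?_
  rw [sum_comm]
  refine sum_congr rfl fun i _ => ?_
  rw [sum_comm]
  refine sum_congr rfl fun j hj => ?_
  rw [← hw s(i, j) ((G.mem_neighborFinset i j).1 hj) k, sum_mul]
  exact sum_congr rfl fun col _ => by ring

section DrivenState

variable {Ω β S : Type*} {c : ℕ → Ω → β} {F : β → S → S} {x₀ : S} {X : ℕ → Ω → S}

def drivenState (F : β → S → S) (x₀ : S) : (t : ℕ) → (Fin t → β) → S
  | 0, _ => x₀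
  | t + 1, v => F (v (Fin.last t)) (drivenState F x₀ t (Fin.init v))

lemma eq_drivenState (h0 : ∀ ω, X 0 ω = x₀) (hX : ∀ t ω, X (t + 1) ω = F (c t ω) (X t ω))
    (t : ℕ) (ω : Ω) : X t ω = drivenState F x₀ t (fun i => c i ω) := by
  induction t with
  | zero => exact h0 ω
  | succ t ih => rw [hX, ih]; rfl

end DrivenState

section Probability

variable {Ω : Type*} [MeasurableSpace Ω] {μ : Measure Ω}

lemma integral_ite_eq_measureReal_preimage {γ : Type*} [MeasurableSpace γ]
    [MeasurableSingletonClass γ] [DecidableEq γ] {f : Ω → γ} (hf : Measurable f) (b : γ) :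
    ∫ ω, (if f ω = b then (1 : ℝ) else 0) ∂μ = μ.real (f ⁻¹' {b}) := by
  rw [← integral_indicator_one (hf (measurableSet_singleton b))]
  congr 1 with ω
  by_cases h : f ω = b <;> simp [h]

lemma ae_tendsto_zero_of_summable_integral {f : ℕ → Ω → ℝ} (hint : ∀ t, Integrable (f t) μ)
    (hnn : ∀ t ω, 0 ≤ f t ω) (hsum : Summable fun t => ∫ ω, f t ω ∂μ) :
    ∀ᵐ ω ∂μ, Tendsto (fun t => f t ω) atTop (𝓝 0) := by
  have hmeas : ∀ t, AEMeasurable (fun ω => ENNReal.ofReal (f t ω)) μ :=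
    fun t => (hint t).aemeasurable.ennreal_ofReal
  have hfin : ∫⁻ ω, ∑' t, ENNReal.ofReal (f t ω) ∂μ ≠ ⊤ := by
    rw [lintegral_tsum hmeas, tsum_congr fun t =>
      (ofReal_integral_eq_lintegral_ofReal (hint t) (ae_of_all _ (hnn t))).symm,
      ← ENNReal.ofReal_tsum_of_nonneg (fun t => integral_nonneg (hnn t)) hsum]
    exact ENNReal.ofReal_ne_top
  filter_upwards [ae_lt_top' (AEMeasurable.tsum hmeas) hfin] with ω hω
  exact (ENNReal.summable_toReal hω.ne).tendsto_atTop_zero.congr fun t =>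
    ENNReal.toReal_ofReal (hnn t ω)

lemma ae_tendsto_zero_of_integral_succ_le {f : ℕ → Ω → ℝ} (hint : ∀ t, Integrable (f t) μ)
    (hnn : ∀ t ω, 0 ≤ f t ω) {ρ : ℝ} (hρ : ρ < 1)
    (hf : ∀ t, ∫ ω, f (t + 1) ω ∂μ ≤ ρ * ∫ ω, f t ω ∂μ) :
    ∀ᵐ ω ∂μ, Tendsto (fun t => f t ω) atTop (𝓝 0) := by
  refine ae_tendsto_zero_of_summable_integral hint hnn ?_
  have hle : ∀ t, ∫ ω, f t ω ∂μ ≤ (∫ ω, f 0 ω ∂μ) * max ρ 0 ^ t := by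
    intro t
    induction t with
    | zero => simp
    | succ t ih =>
      calc ∫ ω, f (t + 1) ω ∂μ ≤ max ρ 0 * ∫ ω, f t ω ∂μ :=
            (hf t).trans (mul_le_mul_of_nonneg_right (le_max_left _ _) (integral_nonneg (hnn t)))
        _ ≤ max ρ 0 * ((∫ ω, f 0 ω ∂μ) * max ρ 0 ^ t) := by gcongr
        _ = (∫ ω, f 0 ω ∂μ) * max ρ 0 ^ (t + 1) := by ring
  exact .of_nonneg_of_le (fun t => integral_nonneg (hnn t)) hle
    ((summable_geometric_of_lt_one (le_max_right _ _) (max_lt hρ one_pos)).mul_left _)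

variable {β S : Type*} [MeasurableSpace β] {c : ℕ → Ω → β}

lemma ProbabilityTheory.iIndepFun.indepFun_history (hc : ∀ t, Measurable (c t))
    (hind : iIndepFun c μ) (t : ℕ) : IndepFun (c t) (fun ω (i : Fin t) => c i ω) μ := by
  have h := (hind.indepFun_finset {t} (range t) (by simp) hc).comp
    (measurable_pi_apply (⟨t, mem_singleton_self t⟩ : ({t} : Finset ℕ)))
    (measurable_pi_lambda (fun v (i : Fin t) => v ⟨i, mem_range.2 i.2⟩)
      fun _ => measurable_pi_apply _)
  exact h

variable {F : β → S → S} {x₀ : S} {X : ℕ → Ω → S}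

lemma integrable_comp_history [Finite β] [MeasurableSingletonClass β] [IsFiniteMeasure μ]
    (hc : ∀ t, Measurable (c t)) (t : ℕ) (Θ : (Fin t → β) → ℝ) :
    Integrable (fun ω => Θ (fun i => c i ω)) μ := by
  obtain ⟨C, hC⟩ := (Set.finite_range fun v => |Θ v|).bddAbove
  exact .of_bound ((measurable_of_countable Θ).comp
    (measurable_pi_lambda _ fun i => hc i)).aestronglyMeasurable C
    (ae_of_all _ fun ω => hC ⟨_, rfl⟩)

lemma integrable_comp_driven [Finite β] [MeasurableSingletonClass β] [IsFiniteMeasure μ]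
    (hc : ∀ t, Measurable (c t)) (h0 : ∀ ω, X 0 ω = x₀)
    (hX : ∀ t ω, X (t + 1) ω = F (c t ω) (X t ω)) (Φ : β → S → ℝ)
    (t : ℕ) : Integrable (fun ω => Φ (c t ω) (X t ω)) μ := by
  simp only [eq_drivenState h0 hX t]
  exact integrable_comp_history hc (t + 1) fun v =>
    Φ (v (Fin.last t)) (drivenState F x₀ t (Fin.init v))

lemma integral_mul_comp_history [Finite β] [MeasurableSingletonClass β]
    (hc : ∀ t, Measurable (c t)) (hind : iIndepFun c μ) (t : ℕ)
    (g : β → ℝ) (Θ : (Fin t → β) → ℝ) :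
    ∫ ω, g (c t ω) * Θ (fun i => c i ω) ∂μ
      = (∫ ω, g (c t ω) ∂μ) * ∫ ω, Θ (fun i => c i ω) ∂μ :=
  ((hind.indepFun_history hc t).comp (measurable_of_countable g)
    (measurable_of_countable Θ)).integral_fun_mul_eq_mul_integral
    ((measurable_of_countable g).comp (hc t)).aestronglyMeasurable
    ((measurable_of_countable Θ).comp (measurable_pi_lambda _ fun i => hc i)).aestronglyMeasurable

/-- Since `c t` is independent of the past, it can be integrated out first. -/
lemma integral_comp_driven [Fintype β] [MeasurableSingletonClass β] [DecidableEq β]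
    [IsProbabilityMeasure μ]
    (hc : ∀ t, Measurable (c t)) (hind : iIndepFun c μ) (h0 : ∀ ω, X 0 ω = x₀)
    (hX : ∀ t ω, X (t + 1) ω = F (c t ω) (X t ω)) (Ψ : β → S → ℝ) (t : ℕ) :
    ∫ ω, Ψ (c t ω) (X t ω) ∂μ = ∫ ω, ∑ b, μ.real (c t ⁻¹' {b}) * Ψ b (X t ω) ∂μ := by
  have hfactor : ∀ b, ∫ ω, (if c t ω = b then 1 else 0) * Ψ b (X t ω) ∂μ
      = μ.real (c t ⁻¹' {b}) * ∫ ω, Ψ b (X t ω) ∂μ := fun b => by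
    simp only [eq_drivenState h0 hX t]
    rw [integral_mul_comp_history hc hind t (fun x => if x = b then 1 else 0)
      fun v => Ψ b (drivenState F x₀ t v),
      integral_ite_eq_measureReal_preimage (hc t)]
  calc ∫ ω, Ψ (c t ω) (X t ω) ∂μ
      = ∫ ω, ∑ b, (if c t ω = b then 1 else 0) * Ψ b (X t ω) ∂μ := by simp
    _ = ∑ b, μ.real (c t ⁻¹' {b}) * ∫ ω, Ψ b (X t ω) ∂μ := by
      rw [integral_finsetSum _ fun b _ => integrable_comp_driven hc h0 hX
        (fun b' q => (if b' = b then 1 else 0) * Ψ b q) t]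
      exact sum_congr rfl fun b _ => hfactor b
    _ = ∫ ω, ∑ b, μ.real (c t ⁻¹' {b}) * Ψ b (X t ω) ∂μ := by
      rw [integral_finsetSum _ fun b _ =>
        (integrable_comp_driven hc h0 hX (fun _ q => Ψ b q) t).const_mul _]
      simp only [integral_const_mul]

end Probability

lemma tendsto_of_sqDeviation_tendsto_zero {V κ : Type*} [Fintype V] [Fintype κ]
    {q : ℕ → V → κ → ℝ} {z : κ → ℝ}
    (h : Tendsto (fun t => sqDeviation (q t) z) atTop (𝓝 0)) (i : V) :
    Tendsto (fun t => q t i) atTop (𝓝 z) := by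
  refine tendsto_pi_nhds.2 fun k => tendsto_iff_norm_sub_tendsto_zero.2 ?_
  have hle : ∀ t, (q t i k - z k) ^ 2 ≤ sqDeviation (q t) z := fun t =>
    (single_le_sum (f := fun k => (q t i k - z k) ^ 2) (fun _ _ => sq_nonneg _) (mem_univ k)).trans
      (single_le_sum (f := fun i => ∑ k, (q t i k - z k) ^ 2) (fun _ _ => by positivity)
        (mem_univ i))
  simpa [Real.sqrt_sq_eq_abs] using (squeeze_zero (fun t => sq_nonneg _) hle h).sqrt

section Consensus

variable {V κ Ω : Type*} [Fintype V] [DecidableEq V] [Fintype κ] [DecidableEq κ]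
  [MeasurableSpace κ] [MeasurableSingletonClass κ] [MeasurableSpace Ω] {μ : Measure Ω}
  [IsProbabilityMeasure μ] {G : SimpleGraph V} [DecidableRel G.Adj] {γ : ℝ} {P : Matrix κ κ ℝ}
  {c : ℕ → Ω → Sym2 V → κ} {r : ℕ → Ω → V → κ → ℝ} {r₀ : V → κ → ℝ} {z : κ → ℝ}

lemma integral_coloredDirichlet (hc : ∀ t, Measurable (c t)) (hind : iIndepFun c μ)
    (hc_unif : ∀ t, ∀ e ∈ G.edgeSet, ∀ k : κ,
      μ {ω | c t ω e = k} = 1 / (Fintype.card κ : ENNReal))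
    (hr0 : ∀ ω, r 0 ω = r₀) (hr : ∀ t ω, r (t + 1) ω = consensusStep G γ P (c t ω) (r t ω))
    (t : ℕ) : ∫ ω, coloredDirichlet G (c t ω) (r t ω) ∂μ
      = (Fintype.card κ : ℝ)⁻¹ * ∫ ω, ∑ k, edgeEnergy G (fun i => r t ω i k) ∂μ := by
  have hw : ∀ e ∈ G.edgeSet, ∀ k, ∑ col, μ.real (c t ⁻¹' {col}) * (if col e = k then 1 else 0)
      = (Fintype.card κ : ℝ)⁻¹ := fun e he k => by
    have h := integral_comp_driven hc hind hr0 hr (fun col _ => if col e = k then (1 : ℝ) else 0) t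
    have hme : Measurable fun ω => c t ω e := (measurable_pi_apply e).comp (hc t)
    rw [integral_const, integral_ite_eq_measureReal_preimage hme] at h
    have hk : (fun ω => c t ω e) ⁻¹' {k} = {ω | c t ω e = k} := rfl
    simpa [measureReal_def, hk, hc_unif t e he k] using h.symm
  rw [integral_comp_driven hc hind hr0 hr (coloredDirichlet G) t]
  simp only [sum_mul_coloredDirichlet univ _ hw]
  exact integral_const_mul _ _

lemma integral_sqDeviation_succ_le (hγ : γ ∈ Set.Ioo 0 1) (hPs : P.IsSymm)
    (hPi : IsIdempotentElem P) (hz : P *ᵥ z = z) (hc : ∀ t, Measurable (c t))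
    (hind : iIndepFun c μ) (hc_proper : ∀ t, ∀ᵐ ω ∂μ, IsProperEdgeColoring G (c t ω))
    (hc_unif : ∀ t, ∀ e ∈ G.edgeSet, ∀ k : κ,
      μ {ω | c t ω e = k} = 1 / (Fintype.card κ : ENNReal))
    (hr0 : ∀ ω, r 0 ω = r₀) (hr : ∀ t ω, r (t + 1) ω = consensusStep G γ P (c t ω) (r t ω))
    {ε : ℝ} (t : ℕ)
    (hε : ∀ᵐ ω ∂μ, ε * sqDeviation (r t ω) z ≤ ∑ k, edgeEnergy G fun i => r t ω i k) :
    ∫ ω, sqDeviation (r (t + 1) ω) z ∂μ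
      ≤ (1 - γ * (1 - γ) * ε / Fintype.card κ) * ∫ ω, sqDeviation (r t ω) z ∂μ := by
  have hint := fun Φ => integrable_comp_driven (μ := μ) hc hr0 hr Φ t
  have hstep : ∫ ω, sqDeviation (r (t + 1) ω) z ∂μ
      ≤ ∫ ω, sqDeviation (r t ω) z - γ * (1 - γ) * coloredDirichlet G (c t ω) (r t ω) ∂μ := by
    refine integral_mono_ae (integrable_comp_driven hc hr0 hr (fun _ q => sqDeviation q z) (t + 1))
      (hint fun col q => sqDeviation q z - γ * (1 - γ) * coloredDirichlet G col q) ?_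
    filter_upwards [hc_proper t] with ω hω
    rw [hr]
    exact sqDeviation_consensusStep_le hω hPs hPi hz γ _
  have hpoinc : ε * ∫ ω, sqDeviation (r t ω) z ∂μ
      ≤ ∫ ω, ∑ k, edgeEnergy G (fun i => r t ω i k) ∂μ := by
    rw [← integral_const_mul]
    exact integral_mono_ae (hint fun _ q => ε * sqDeviation q z)
      (hint fun _ q => ∑ k, edgeEnergy G fun i => q i k) hε
  have hγ' : 0 ≤ γ * (1 - γ) := mul_nonneg hγ.1.le (sub_nonneg.2 hγ.2.le)
  rw [integral_sub (hint fun _ q => sqDeviation q z) ((hint (coloredDirichlet G)).const_mul _),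
    integral_const_mul,
    integral_coloredDirichlet hc hind hc_unif hr0 hr] at hstep
  calc ∫ ω, sqDeviation (r (t + 1) ω) z ∂μ
      ≤ ∫ ω, sqDeviation (r t ω) z ∂μ - γ * (1 - γ) * ((Fintype.card κ : ℝ)⁻¹
          * (ε * ∫ ω, sqDeviation (r t ω) z ∂μ)) := by
        refine hstep.trans (sub_le_sub_left ?_ _)
        gcongr
    _ = (1 - γ * (1 - γ) * ε / Fintype.card κ) * ∫ ω, sqDeviation (r t ω) z ∂μ := by ring

theorem ae_tendsto_of_consensusStep [Nonempty κ] (hG : G.Connected) (hγ : γ ∈ Set.Ioo 0 1)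
    (hPs : P.IsSymm) (hPi : IsIdempotentElem P) (hz : P *ᵥ z = z) (hc : ∀ t, Measurable (c t))
    (hind : iIndepFun c μ) (hc_proper : ∀ t, ∀ᵐ ω ∂μ, IsProperEdgeColoring G (c t ω))
    (hc_unif : ∀ t, ∀ e ∈ G.edgeSet, ∀ k : κ,
      μ {ω | c t ω e = k} = 1 / (Fintype.card κ : ENNReal))
    (hr0 : ∀ ω, r 0 ω = r₀) (hr : ∀ t ω, r (t + 1) ω = consensusStep G γ P (c t ω) (r t ω))
    (hz_avg : ∑ i, r₀ i = (Fintype.card V : ℝ) • z) :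
    ∀ᵐ ω ∂μ, ∀ i, Tendsto (fun t => r t ω i) atTop (𝓝 z) := by
  obtain ⟨ε, hε, hpoinc⟩ := exists_pos_mul_sqDeviation_le (κ := κ) hG
  have hsum : ∀ᵐ ω ∂μ, ∀ t, ∑ i, r t ω i = (Fintype.card V : ℝ) • z := by
    filter_upwards [ae_all_iff.2 hc_proper] with ω hω t
    induction t with
    | zero => rw [hr0, hz_avg]
    | succ t ih => rw [hr, sum_consensusStep (hω t), ih, mulVec_smul, hz]
  have hρ : 1 - γ * (1 - γ) * ε / Fintype.card κ < 1 := by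
    have := mul_pos hγ.1 (sub_pos.2 hγ.2)
    have : (0 : ℝ) < Fintype.card κ := by exact_mod_cast Fintype.card_pos
    linarith [show 0 < γ * (1 - γ) * ε / Fintype.card κ by positivity]
  have hV := ae_tendsto_zero_of_integral_succ_le
    (fun t => integrable_comp_driven hc hr0 hr (fun _ q => sqDeviation q z) t)
    (fun t ω => by unfold sqDeviation; positivity) hρ fun t =>
      integral_sqDeviation_succ_le hγ hPs hPi hz hc hind hc_proper hc_unif hr0 hr t
        (hsum.mono fun ω h => hpoinc _ _ (h t))
  filter_upwards [hV] with ω hω i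
  exact tendsto_of_sqDeviation_tendsto_zero hω i

end Consensus

theorem privacy_preserving_average_consensus_general
    {N : ℕ} (G : SimpleGraph (Fin N)) [DecidableRel G.Adj] (hG : G.Connected)
    (M : ℕ)
    (γ : ℝ) (hγ : γ ∈ Set.Ioo (0 : ℝ) 1)
    (s : Fin M → ℝ) (hs_inj : Function.Injective s)
    (p₀ : ℕ) (hp₀ : p₀ + 1 ≤ M)
    {Ω : Type*} [MeasurableSpace Ω] (μ : Measure Ω) [IsProbabilityMeasure μ]
    (c : ℕ → Ω → Sym2 (Fin N) → Fin M)
    (hc_meas : ∀ t, Measurable (c t))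
    (hc_indep : iIndepFun c μ)
    (hc_proper : ∀ t, ∀ᵐ ω ∂μ, ∀ e ∈ G.edgeSet, ∀ e' ∈ G.edgeSet, e ≠ e' →
      (∃ v : Fin N, v ∈ e ∧ v ∈ e') → c t ω e ≠ c t ω e')
    (hc_unif : ∀ t, ∀ e ∈ G.edgeSet, ∀ k : Fin M,
      μ {ω | c t ω e = k} = 1 / (M : ENNReal))
    (a : Fin N → Fin p₀ → ℝ) (x0 : Fin N → ℝ)
    (r : ℕ → Ω → Fin N → Fin M → ℝ)
    (hr_init : ∀ (ω : Ω) (i : Fin N) (k : Fin M),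
      r 0 ω i k = (∑ ℓ : Fin p₀, a i ℓ * s k ^ ((ℓ : ℕ) + 1)) + x0 i)
    (hr_upd : ∀ (t : ℕ) (ω : Ω) (i : Fin N),
      r (t + 1) ω i = (projMat M p₀ s).mulVec
        (fun k => r t ω i k + γ * ∑ j ∈ G.neighborFinset i,
          (if c t ω s(i, j) = k then (1 : ℝ) else 0) * (r t ω j k - r t ω i k))) :
    ∀ᵐ ω ∂μ, ∀ i : Fin N,
      Tendsto (fun t => ∑ k : Fin M, r t ω i k *
          ((∏ ℓ ∈ Finset.univ.erase k, (-(s ℓ))) /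
            (∏ ℓ ∈ Finset.univ.erase k, (s k - s ℓ))))
        atTop (nhds ((N : ℝ)⁻¹ * ∑ j, x0 j)) := by
  have : Nonempty (Fin M) := ⟨⟨0, by omega⟩⟩
  have hN : (N : ℝ) ≠ 0 := by
    obtain ⟨i⟩ := hG.nonempty
    exact Nat.cast_ne_zero.2 (Fin.pos i).ne'
  -- the coefficient vector of the encoding polynomial `f_i`, constant term first
  set y : Fin N → Fin (p₀ + 1) → ℝ := fun i => Fin.cons (x0 i) (a i)
  set z := vandMat M p₀ s *ᵥ ((N : ℝ)⁻¹ • ∑ i, y i)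
  have hr0 : ∀ ω, r 0 ω = fun i => vandMat M p₀ s *ᵥ y i := fun ω => by
    funext i k
    simp [hr_init, vandMat_mulVec_apply, Fin.sum_univ_succ, y, add_comm]
  have hz_avg : ∑ i, vandMat M p₀ s *ᵥ y i = (Fintype.card (Fin N) : ℝ) • z := by
    rw [Fintype.card_fin, ← mulVec_smul, smul_smul, mul_inv_cancel₀ hN, one_smul, mulVec_sum]
  have hlim : ∑ k, z k * ((∏ ℓ ∈ univ.erase k, (-(s ℓ))) / (∏ ℓ ∈ univ.erase k, (s k - s ℓ)))
      = (N : ℝ)⁻¹ * ∑ j, x0 j := by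
    rw [sum_vandMat_mulVec_mul_lagrange hs_inj hp₀]
    simp [y]
  have hcons := ae_tendsto_of_consensusStep hG hγ isSymm_mul_inv_transpose_mul_self_mul_transpose
    (isIdempotentElem_mul_inv_transpose_mul_self_mul_transpose
      (injective_vandMat_mulVec hs_inj hp₀))
    (projMat_mulVec_vandMat_mulVec hs_inj hp₀ _) hc_meas hc_indep hc_proper
    (by simpa using hc_unif) hr0 (fun t ω => funext (hr_upd t ω)) hz_avg
  filter_upwards [hcons] with ω hω i
  rw [← hlim]
  exact tendsto_finsetSum _ fun k _ => (((continuous_apply k).tendsto z).comp (hω i)).mul_const _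

/-- **Theorem 1: privacy-preserving average consensus, common degree.**
In the common-privacy-degree dynamics, if the initial encoded states are generated by the
encoding polynomials `f_i(θ) = Σ_{ℓ=1}^{p₀} a_{iℓ} θ^ℓ + x_i(0)` via `r_i^k(0) = f_i(s_k)`,
and the state is reconstructed by the Lagrange formula
`x_i(t) = Σ_k r_i^k(t) (Π_{ℓ≠k} (−s_ℓ)) / (Π_{ℓ≠k} (s_k − s_ℓ))`, then, almost surely,
`x_i(t) → (1/N) Σ_j x_j(0)` for every agent `i`: average consensus is reached. -/
theorem privacy_preserving_average_consensus
    {N : ℕ} (G : SimpleGraph (Fin N)) [DecidableRel G.Adj] (hG : G.Connected)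
    (M : ℕ) (hM : 2 * G.maxDegree ≤ M + 1)
    (γ : ℝ) (hγ : γ ∈ Set.Ioo (0 : ℝ) 1)
    (s : Fin M → ℝ) (hs_inj : Function.Injective s) (hs_ne : ∀ k, s k ≠ 0)
    (p₀ : ℕ) (hp₀ : p₀ + 1 ≤ M)
    {Ω : Type*} [MeasurableSpace Ω] (μ : Measure Ω) [IsProbabilityMeasure μ]
    (c : ℕ → Ω → Sym2 (Fin N) → Fin M)
    (hc_meas : ∀ t, Measurable (c t))
    (hc_indep : iIndepFun c μ)
    (hc_proper : ∀ t, ∀ᵐ ω ∂μ, ∀ e ∈ G.edgeSet, ∀ e' ∈ G.edgeSet, e ≠ e' →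
      (∃ v : Fin N, v ∈ e ∧ v ∈ e') → c t ω e ≠ c t ω e')
    (hc_unif : ∀ t, ∀ e ∈ G.edgeSet, ∀ k : Fin M,
      μ {ω | c t ω e = k} = 1 / (M : ENNReal))
    (a : Fin N → Fin p₀ → ℝ) (x0 : Fin N → ℝ)
    (r : ℕ → Ω → Fin N → Fin M → ℝ)
    (hr_init : ∀ (ω : Ω) (i : Fin N) (k : Fin M),
      r 0 ω i k = (∑ ℓ : Fin p₀, a i ℓ * s k ^ ((ℓ : ℕ) + 1)) + x0 i)
    (hr_upd : ∀ (t : ℕ) (ω : Ω) (i : Fin N),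
      r (t + 1) ω i = (projMat M p₀ s).mulVec
        (fun k => r t ω i k + γ * ∑ j ∈ G.neighborFinset i,
          (if c t ω s(i, j) = k then (1 : ℝ) else 0) * (r t ω j k - r t ω i k))) :
    ∀ᵐ ω ∂μ, ∀ i : Fin N,
      Tendsto (fun t => ∑ k : Fin M, r t ω i k *
          ((∏ ℓ ∈ Finset.univ.erase k, (-(s ℓ))) /
            (∏ ℓ ∈ Finset.univ.erase k, (s k - s ℓ))))
        atTop (nhds ((N : ℝ)⁻¹ * ∑ j, x0 j)) :=
  privacy_preserving_average_consensus_general G hG M γ hγ s hs_inj p₀ hp₀ μ c hc_meas hc_indep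
    hc_proper hc_unif a x0 r hr_init hr_upd
end

section
/- Let G be a finite simple graph on {1, …, N} with edge set E, let M be a positive integer, γ a real number, s_1, …, s_M distinct nonzero reals, and p_1, …, p_N integers with 0 ≤ p_i ≤ M − 1 and p̄ = min_i p_i. Let (c_t)_{t∈ℕ} be any (deterministic) sequence of maps E → {1, …, M} each assigning different colors to distinct adjacent edges, and let each agent i update r_i(t) ∈ ℝ^M by r̃_i^k(t+1) = r_i^k(t) + γ Σ_{j:{i,j}∈E} 1(c_t({i,j})=k)(r_j^k(t) − r_i^k(t)) followed by r_i(t+1) = T̄_{p_i} r̃_i(t+1), with each r_i(0) in the column span of Φ_{p_i}. Then for every ℓ ∈ {1, …, p̄ + 1} and every t ∈ ℕ, Σ_{j=1}^N ⟨v_ℓ, r_j(t)⟩ = Σ_{j=1}^N ⟨v_ℓ, r_j(0)⟩, where v_ℓ = (s_1^{ℓ−1}, …, s_M^{ℓ−1}) ∈ ℝ^M; i.e., the quantities (v_ℓ ⊗ 𝟏_N)ᵀ r(t) are invariants of the dynamics. -/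
open Matrix

lemma vand_mulVec_eq_zero {M p : ℕ} {s : Fin M → ℝ} (hs : Function.Injective s)
    (hp : p + 1 ≤ M) {x : Fin (p + 1) → ℝ} (hx : (vandMat M p s).mulVec x = 0) : x = 0 := by
  have hV : (Matrix.vandermonde (fun ℓ : Fin (p+1) => s (Fin.castLE hp ℓ))).det ≠ 0 := by
    rw [Matrix.det_vandermonde_ne_zero_iff]
    intro a b hab
    exact Fin.castLE_injective hp (hs hab)
  have hinj := Matrix.mulVec_injective_iff_isUnit.mpr
    ((Matrix.isUnit_iff_isUnit_det _).mpr (isUnit_iff_ne_zero.mpr hV))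
  have h0 : (Matrix.vandermonde (fun ℓ : Fin (p+1) => s (Fin.castLE hp ℓ))).mulVec x = 0 := by
    funext ℓ
    have := congrFun hx (Fin.castLE hp ℓ)
    simpa [Matrix.mulVec, dotProduct, Matrix.vandermonde, vandMat] using this
  exact hinj (by simp [h0])

lemma gram_isUnit {M p : ℕ} {s : Fin M → ℝ} (hs : Function.Injective s) (hp : p + 1 ≤ M) :
    IsUnit ((vandMat M p s)ᵀ * vandMat M p s).det := by
  rw [← Matrix.isUnit_iff_isUnit_det, ← Matrix.mulVec_injective_iff_isUnit]
  intro x y hxy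
  set Φ := vandMat M p s
  have h : (Φᵀ * Φ).mulVec (x - y) = 0 := by
    rw [Matrix.mulVec_sub, hxy, sub_self]
  have hd : Φ.mulVec (x - y) ⬝ᵥ Φ.mulVec (x - y) = 0 := by
    calc Φ.mulVec (x - y) ⬝ᵥ Φ.mulVec (x - y)
        = (x - y) ⬝ᵥ (Φᵀ * Φ).mulVec (x - y) := by
          rw [Matrix.dotProduct_mulVec, Matrix.dotProduct_mulVec, ← Matrix.vecMul_vecMul,
            Matrix.vecMul_transpose]
      _ = 0 := by rw [h]; simp
  have h2 : Φ.mulVec (x - y) = 0 := dotProduct_self_eq_zero.mp hd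
  exact sub_eq_zero.mp (vand_mulVec_eq_zero hs hp h2)

lemma key_proj {M p : ℕ} {s : Fin M → ℝ} (hs : Function.Injective s) (hp : p + 1 ≤ M)
    (ℓ : Fin (p + 1)) (x : Fin M → ℝ) :
    ∑ k, s k ^ (ℓ : ℕ) * (projMat M p s).mulVec x k = ∑ k, s k ^ (ℓ : ℕ) * x k := by
  set Φ := vandMat M p s
  have hmul : Φᵀ * projMat M p s = Φᵀ := by
    rw [projMat, ← Matrix.mul_assoc, ← Matrix.mul_assoc,
      Matrix.mul_nonsing_inv _ (gram_isUnit hs hp), Matrix.one_mul]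
  have h1 : ∀ y : Fin M → ℝ, ∑ k, s k ^ (ℓ : ℕ) * y k = Φᵀ.mulVec y ℓ := by
    intro y
    simp [Matrix.mulVec, dotProduct, Φ, vandMat]
  rw [h1, h1, Matrix.mulVec_mulVec, hmul]

lemma sum_neighbor_antisym {N : ℕ} (G : SimpleGraph (Fin N)) [DecidableRel G.Adj]
    (f : Fin N → Fin N → ℝ) (hf : ∀ a b, f a b = - f b a) :
    ∑ j, ∑ j' ∈ G.neighborFinset j, f j j' = 0 := by
  have h : ∑ j, ∑ j' ∈ G.neighborFinset j, f j j'
      = ∑ j : Fin N, ∑ j' : Fin N, if G.Adj j j' then f j j' else 0 := by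
    refine Finset.sum_congr rfl fun j _ => ?_
    rw [SimpleGraph.neighborFinset_eq_filter, Finset.sum_filter]
  have h2 : ∑ j : Fin N, ∑ j' : Fin N, (if G.Adj j j' then f j j' else 0)
      = - ∑ j : Fin N, ∑ j' : Fin N, (if G.Adj j j' then f j j' else 0) := by
    conv_lhs => rw [Finset.sum_comm]
    rw [← Finset.sum_neg_distrib]
    refine Finset.sum_congr rfl fun a _ => ?_
    rw [← Finset.sum_neg_distrib]
    refine Finset.sum_congr rfl fun b _ => ?_
    by_cases hadj : G.Adj a b
    · rw [if_pos hadj.symm, if_pos hadj, hf b a]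
    · rw [if_neg (fun hc => hadj hc.symm), if_neg hadj, neg_zero]
  rw [h]
  linarith [h2]

/-- **conserved quantities of the dynamics.**
For any (deterministic) sequence of proper edge colorings `c_t` of `G` with `M` colors and
the privacy-preserving update with per-agent projections `T̄_{p_i}`, starting in the column
span of `Φ_{p_i}`, the quantities `Σ_j ⟨v_ℓ, r_j(t)⟩`, `ℓ ∈ {1, …, p̄ + 1}` with
`p̄ = min_i p_i` and `v_ℓ = (s_1^{ℓ−1}, …, s_M^{ℓ−1})`, are invariant in time. -/
theorem conserved_quantities
    {N : ℕ} (G : SimpleGraph (Fin N)) [DecidableRel G.Adj]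
    (M : ℕ) (hM : 0 < M)
    (γ : ℝ)
    (s : Fin M → ℝ) (hs_inj : Function.Injective s) (hs_ne : ∀ k, s k ≠ 0)
    (p : Fin N → ℕ) (hp : ∀ i, p i + 1 ≤ M)
    (c : ℕ → Sym2 (Fin N) → Fin M)
    (hc_proper : ∀ t, ∀ e ∈ G.edgeSet, ∀ e' ∈ G.edgeSet, e ≠ e' →
      (∃ v : Fin N, v ∈ e ∧ v ∈ e') → c t e ≠ c t e')
    (r : ℕ → Fin N → Fin M → ℝ)
    (hr0_span : ∀ i : Fin N, r 0 i ∈ Submodule.span ℝ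
      (Set.range fun ℓ : Fin (p i + 1) => fun k : Fin M => vandMat M (p i) s k ℓ))
    (hr_upd : ∀ (t : ℕ) (i : Fin N),
      r (t + 1) i = (projMat M (p i) s).mulVec
        (fun k => r t i k + γ * ∑ j ∈ G.neighborFinset i,
          (if c t s(i, j) = k then (1 : ℝ) else 0) * (r t j k - r t i k))) :
    ∀ (ℓ : Fin ((⨅ i, p i) + 1)) (t : ℕ),
      (∑ j, ∑ k, s k ^ (ℓ : ℕ) * r t j k) = ∑ j, ∑ k, s k ^ (ℓ : ℕ) * r 0 j k := by
  intro ℓ t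
  induction t with
  | zero => rfl
  | succ t ih =>
    have hstep : ∀ j : Fin N, (∑ k, s k ^ (ℓ : ℕ) * r (t+1) j k)
        = ∑ k, s k ^ (ℓ : ℕ) * (r t j k + γ * ∑ j' ∈ G.neighborFinset j,
            (if c t s(j, j') = k then (1 : ℝ) else 0) * (r t j' k - r t j k)) := by
      intro j
      have hle : (⨅ i, p i) ≤ p j := ciInf_le (OrderBot.bddBelow _) j
      have hℓ : (ℓ : ℕ) < p j + 1 := lt_of_lt_of_le ℓ.isLt (by omega)
      have hk := key_proj (M := M) (p := p j) hs_inj (hp j) ⟨(ℓ : ℕ), hℓ⟩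
        (fun k => r t j k + γ * ∑ j' ∈ G.neighborFinset j,
            (if c t s(j, j') = k then (1 : ℝ) else 0) * (r t j' k - r t j k))
      rw [hr_upd t j]
      simpa using hk
    have hzero : ∀ k : Fin M, (∑ j, ∑ j' ∈ G.neighborFinset j,
        (if c t s(j, j') = k then (1 : ℝ) else 0) * (r t j' k - r t j k)) = 0 := by
      intro k
      refine sum_neighbor_antisym G _ fun a b => ?_
      rw [Sym2.eq_swap (a := a) (b := b)]
      ring
    calc (∑ j, ∑ k, s k ^ (ℓ : ℕ) * r (t+1) j k)
        = ∑ j, ∑ k, s k ^ (ℓ : ℕ) * (r t j k + γ * ∑ j' ∈ G.neighborFinset j,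
            (if c t s(j, j') = k then (1 : ℝ) else 0) * (r t j' k - r t j k)) :=
          Finset.sum_congr rfl fun j _ => hstep j
      _ = (∑ j, ∑ k, s k ^ (ℓ : ℕ) * r t j k)
          + ∑ k, s k ^ (ℓ : ℕ) * γ * ∑ j, ∑ j' ∈ G.neighborFinset j,
            (if c t s(j, j') = k then (1 : ℝ) else 0) * (r t j' k - r t j k) := by
          have hB : (∑ k, s k ^ (ℓ : ℕ) * γ * ∑ j, ∑ j' ∈ G.neighborFinset j,
              (if c t s(j, j') = k then (1 : ℝ) else 0) * (r t j' k - r t j k))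
              = ∑ j, ∑ k, s k ^ (ℓ : ℕ) * γ * ∑ j' ∈ G.neighborFinset j,
                (if c t s(j, j') = k then (1 : ℝ) else 0) * (r t j' k - r t j k) :=
            (Finset.sum_congr rfl fun k _ => Finset.mul_sum _ _ _).trans Finset.sum_comm
          rw [hB, ← Finset.sum_add_distrib]
          refine Finset.sum_congr rfl fun j _ => ?_
          rw [← Finset.sum_add_distrib]
          refine Finset.sum_congr rfl fun k _ => ?_
          ring
      _ = ∑ j, ∑ k, s k ^ (ℓ : ℕ) * r t j k := by
          have : (∑ k, s k ^ (ℓ : ℕ) * γ * ∑ j, ∑ j' ∈ G.neighborFinset j,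
            (if c t s(j, j') = k then (1 : ℝ) else 0) * (r t j' k - r t j k)) = 0 := by
            refine Finset.sum_eq_zero fun k _ => ?_
            rw [hzero k, mul_zero]
          rw [this, add_zero]
      _ = ∑ j, ∑ k, s k ^ (ℓ : ℕ) * r 0 j k := ih
end
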